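/- arXiv:1507.00844 — 4 statements merged into one kernel-verified Lean document; each statement's English description precedes it below -/
import Mathlib

section
/- For every k ∈ ℕ and ε > 0 there exists M ∈ ℕ such that for every finite set X and every function F : X^k → [−1,1], one can write F = F_s + F_u where: (a) F_s is measurable with respect to the σ-algebra generated by B₁ ∨ ⋯ ∨ B_k, where each B_j is a partition of X^k into at most M atoms, each atom of B_j being independent of the j-th coordinate (i.e., a union of fibers of the projection forgetting coordinate j); (b) ‖F_u‖_{□^k} ≤ ε; (c) |F_s| ≤ 2 and |F_u| ≤ 2 pointwise. -/
/-- `2^k`-th power of the `k`-dimensional Gowers box norm of `H : X₁ × ⋯ × X_k → ℝ`. -/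
noncomputable def boxPow {k : ℕ} (X : Fin k → Type) [∀ j, Fintype (X j)]
    (H : (∀ j, X j) → ℝ) : ℝ :=
  (∑ x : ∀ j, X j, ∑ y : ∀ j, X j,
      ∏ ε : Fin k → Bool, H (fun j => if ε j then y j else x j)) /
    ((Fintype.card (∀ j, X j) : ℝ)) ^ 2

/-- The `k`-dimensional Gowers box norm, `‖H‖_{□^k} = (boxPow H)^{1/2^k}`. -/
noncomputable def boxNorm {k : ℕ} (X : Fin k → Type) [∀ j, Fintype (X j)]
    (H : (∀ j, X j) → ℝ) : ℝ :=
  (boxPow X H) ^ ((2 ^ k : ℝ)⁻¹)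

set_option maxHeartbeats 1000000

open Finset

/-- Average of `G` over the fiber of `c` above `i`. -/
noncomputable def cphi {Ω I : Type*} [Fintype Ω] [DecidableEq I] (G : Ω → ℝ) (c : Ω → I)
    (i : I) : ℝ :=
  (∑ y ∈ Finset.univ.filter (fun y => c y = i), G y) /
    ((Finset.univ.filter (fun y => c y = i)).card : ℝ)

lemma cphi_proj {Ω I : Type*} [Fintype Ω] [DecidableEq I] (G : Ω → ℝ) (c : Ω → I) (ψ : I → ℝ) :
    ∑ x, cphi G c (c x) * ψ (c x) = ∑ x, G x * ψ (c x) := by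
  classical
  rw [← Finset.sum_fiberwise_of_maps_to (t := Finset.univ.image c)
        (fun x _ => Finset.mem_image_of_mem c (Finset.mem_univ x))
        (fun x => cphi G c (c x) * ψ (c x)),
      ← Finset.sum_fiberwise_of_maps_to (t := Finset.univ.image c)
        (fun x _ => Finset.mem_image_of_mem c (Finset.mem_univ x))
        (fun x => G x * ψ (c x))]
  refine Finset.sum_congr rfl fun i _ => ?_
  have hL : ∑ x ∈ Finset.univ.filter (fun x => c x = i), cphi G c (c x) * ψ (c x)
      = ∑ x ∈ Finset.univ.filter (fun x => c x = i), cphi G c i * ψ i :=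
    Finset.sum_congr rfl fun x hx => by rw [(Finset.mem_filter.mp hx).2]
  have hR : ∑ x ∈ Finset.univ.filter (fun x => c x = i), G x * ψ (c x)
      = (∑ x ∈ Finset.univ.filter (fun x => c x = i), G x) * ψ i := by
    rw [Finset.sum_mul]
    exact Finset.sum_congr rfl fun x hx => by rw [(Finset.mem_filter.mp hx).2]
  rw [hL, hR, Finset.sum_const, nsmul_eq_mul]
  by_cases hn : (Finset.univ.filter (fun x => c x = i)).card = 0
  · simp [hn, Finset.card_eq_zero.mp hn]
  · unfold cphi
    have : ((Finset.univ.filter (fun x => c x = i)).card : ℝ) ≠ 0 := Nat.cast_ne_zero.mpr hn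
    field_simp

lemma cphi_abs_le {Ω I : Type*} [Fintype Ω] [DecidableEq I] {G : Ω → ℝ} {B : ℝ}
    (hG : ∀ y, |G y| ≤ B) (c : Ω → I) (x : Ω) : |cphi G c (c x)| ≤ B := by
  classical
  have hx : x ∈ Finset.univ.filter (fun y => c y = c x) := by simp
  have hcard : 0 < ((Finset.univ.filter (fun y => c y = c x)).card : ℝ) := by
    exact_mod_cast Finset.card_pos.mpr ⟨x, hx⟩
  unfold cphi
  rw [abs_div, abs_of_pos hcard, div_le_iff₀ hcard]
  calc |∑ y ∈ Finset.univ.filter (fun y => c y = c x), G y|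
      ≤ ∑ y ∈ Finset.univ.filter (fun y => c y = c x), |G y| :=
        Finset.abs_sum_le_sum_abs _ _
    _ ≤ ∑ y ∈ Finset.univ.filter (fun y => c y = c x), B :=
        Finset.sum_le_sum fun y _ => hG y
    _ = _ := by rw [Finset.sum_const, nsmul_eq_mul]; ring

lemma cphi_pythagoras {Ω I I' : Type*} [Fintype Ω] [DecidableEq I] [DecidableEq I']
    (G : Ω → ℝ) (c : Ω → I) (c' : Ω → I') (R : I' → I) (hR : ∀ x, c x = R (c' x)) :
    ∑ x, (cphi G c' (c' x)) ^ 2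
      = ∑ x, (cphi G c (c x)) ^ 2 + ∑ x, (cphi G c' (c' x) - cphi G c (c x)) ^ 2 := by
  classical
  set a : Ω → ℝ := fun x => cphi G c' (c' x) with ha
  set b : Ω → ℝ := fun x => cphi G c (c x) with hb
  have h1 : ∑ x, a x * a x = ∑ x, G x * a x := cphi_proj G c' (cphi G c')
  have h2 : ∑ x, a x * b x = ∑ x, G x * b x := by
    have := cphi_proj G c' (fun i => cphi G c (R i))
    simpa only [← hR] using this
  have h3 : ∑ x, b x * b x = ∑ x, G x * b x := cphi_proj G c (cphi G c)
  have e1 : ∑ x, (a x - b x) ^ 2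
      = ∑ x, a x * a x - 2 * ∑ x, a x * b x + ∑ x, b x * b x := by
    calc ∑ x, (a x - b x) ^ 2
        = ∑ x, (a x * a x - 2 * (a x * b x) + b x * b x) :=
          Finset.sum_congr rfl fun x _ => by ring
      _ = _ := by rw [Finset.sum_add_distrib, Finset.sum_sub_distrib, ← Finset.mul_sum]
  have e2 : ∀ f : Ω → ℝ, ∑ x, f x ^ 2 = ∑ x, f x * f x := fun f =>
    Finset.sum_congr rfl fun x _ => sq (f x) ▸ by ring
  rw [e2 a, e2 b, e1]
  linarith [h1, h2, h3]

lemma abs_prod_sub_prod_le {ι : Type*} [DecidableEq ι] (s : Finset ι) (a b : ι → ℝ) {B : ℝ}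
    (hB : 1 ≤ B) (ha : ∀ i ∈ s, |a i| ≤ B) (hb : ∀ i ∈ s, |b i| ≤ B) :
    |∏ i ∈ s, a i - ∏ i ∈ s, b i| ≤ (∑ i ∈ s, |a i - b i|) * B ^ s.card := by
  induction s using Finset.cons_induction with
  | empty => simp
  | cons i s hi ih =>
    rw [Finset.prod_cons, Finset.prod_cons, Finset.sum_cons, Finset.card_cons]
    have hb' : ∀ j ∈ s, |b j| ≤ B := fun j hj => hb j (Finset.mem_cons_of_mem hj)
    have ha' : ∀ j ∈ s, |a j| ≤ B := fun j hj => ha j (Finset.mem_cons_of_mem hj)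
    have hpb : |∏ j ∈ s, b j| ≤ B ^ s.card := by
      rw [Finset.abs_prod]
      calc ∏ j ∈ s, |b j| ≤ ∏ j ∈ s, B :=
            Finset.prod_le_prod (fun j _ => abs_nonneg _) hb'
        _ = B ^ s.card := Finset.prod_const B
    have key : a i * ∏ j ∈ s, a j - b i * ∏ j ∈ s, b j
        = a i * (∏ j ∈ s, a j - ∏ j ∈ s, b j) + (a i - b i) * ∏ j ∈ s, b j := by ring
    have hstep := ih ha' hb'
    have h0 : (0:ℝ) ≤ ∑ j ∈ s, |a j - b j| := Finset.sum_nonneg fun j _ => abs_nonneg _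
    have hBn : (0:ℝ) ≤ B ^ s.card := pow_nonneg (by linarith) _
    have hpow : B ^ s.card ≤ B ^ (s.card + 1) :=
      pow_le_pow_right₀ hB (Nat.le_succ _)
    calc |a i * ∏ j ∈ s, a j - b i * ∏ j ∈ s, b j|
        ≤ |a i| * |∏ j ∈ s, a j - ∏ j ∈ s, b j| + |a i - b i| * |∏ j ∈ s, b j| := by
          rw [key]
          exact (abs_add_le _ _).trans (by rw [abs_mul, abs_mul])
      _ ≤ B * ((∑ j ∈ s, |a j - b j|) * B ^ s.card) + |a i - b i| * B ^ s.card := by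
          have h1 := ha i (Finset.mem_cons_self i s)
          have h2 := abs_nonneg (a i)
          gcongr
      _ ≤ (|a i - b i| + ∑ j ∈ s, |a j - b j|) * B ^ (s.card + 1) := by
          have h3 := abs_nonneg (a i - b i)
          rw [pow_succ]
          nlinarith [mul_le_mul_of_nonneg_left (le_mul_of_one_le_right hBn hB) h3]

lemma extraction {k : ℕ} {X : Type} [Fintype X] [Nonempty X] (H : (Fin k → X) → ℝ)
    (hH : ∀ x, |H x| ≤ 2) {δ : ℝ} (hδ : 0 < δ)
    (hbox : δ < |boxPow (fun _ : Fin k => X) H|) :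
    ∃ u : Fin k → (Fin k → X) → ℝ,
      (∀ j x y, (∀ j', j' ≠ j → x j' = y j') → u j x = u j y) ∧
      (∀ j x, |u j x| ≤ 2 ^ (2 ^ k)) ∧
      (Fintype.card (Fin k → X) : ℝ) * δ ≤ |∑ x : Fin k → X, H x * ∏ j, u j x| := by
  classical
  set N : ℕ := Fintype.card (Fin k → X) with hN
  have hN0 : 0 < N := Fintype.card_pos
  have hN0' : (0:ℝ) < N := by exact_mod_cast hN0
  have hbox' : (N:ℝ) * ((N:ℝ) * δ) <
      |∑ y : Fin k → X, ∑ x : Fin k → X,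
        ∏ ε : Fin k → Bool, H (fun j => if ε j then y j else x j)| := by
    have hrw : boxPow (fun _ : Fin k => X) H =
        (∑ x : Fin k → X, ∑ y : Fin k → X,
          ∏ ε : Fin k → Bool, H (fun j => if ε j then y j else x j)) / (N:ℝ) ^ 2 := rfl
    rw [hrw, abs_div, abs_of_pos (pow_pos hN0' 2), lt_div_iff₀ (pow_pos hN0' 2)] at hbox
    rw [Finset.sum_comm]
    nlinarith [hbox]
  have hex : ∃ y₀ : Fin k → X, (N:ℝ) * δ <
      |∑ x : Fin k → X, ∏ ε : Fin k → Bool, H (fun j => if ε j then y₀ j else x j)| := by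
    by_contra hcon
    push_neg at hcon
    have h1 := Finset.abs_sum_le_sum_abs
      (fun y : Fin k → X => ∑ x : Fin k → X,
        ∏ ε : Fin k → Bool, H (fun j => if ε j then y j else x j)) Finset.univ
    have h2 : ∑ y : Fin k → X,
        |∑ x : Fin k → X, ∏ ε : Fin k → Bool, H (fun j => if ε j then y j else x j)|
        ≤ ∑ _y : Fin k → X, (N:ℝ) * δ := Finset.sum_le_sum fun y _ => hcon y
    rw [Finset.sum_const, Finset.card_univ, nsmul_eq_mul] at h2
    have : (Fintype.card (Fin k → X) : ℝ) = (N:ℝ) := by rw [hN]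
    rw [this] at h2
    linarith
  obtain ⟨y₀, hy₀⟩ := hex
  set mix : (Fin k → Bool) → (Fin k → X) → (Fin k → X) :=
    fun ε x => fun j => if ε j then y₀ j else x j with hmix
  set cls : Fin k → Finset (Fin k → Bool) :=
    fun j => Finset.univ.filter
      (fun ε : Fin k → Bool => ε j = true ∧ ∀ j', j' < j → ε j' = false) with hcls
  refine ⟨fun j x => ∏ ε ∈ cls j, H (mix ε x), ?_, ?_, ?_⟩
  · -- independence of coordinate j
    intro j x y hxy
    refine Finset.prod_congr rfl fun ε hε => ?_
    obtain ⟨hεj, -⟩ := (Finset.mem_filter.mp hε).2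
    congr 1
    funext i
    by_cases hi : ε i = true
    · simp [hmix, hi]
    · have hij : i ≠ j := fun h => hi (h ▸ hεj)
      simp [hmix, hi, hxy i hij]
  · -- bound
    intro j x
    rw [Finset.abs_prod]
    calc ∏ ε ∈ cls j, |H (mix ε x)| ≤ ∏ ε ∈ cls j, 2 :=
          Finset.prod_le_prod (fun _ _ => abs_nonneg _) (fun ε _ => hH _)
      _ = 2 ^ (cls j).card := Finset.prod_const 2
      _ ≤ 2 ^ (2 ^ k) := by
          apply pow_le_pow_right₀ (by norm_num : (1:ℝ) ≤ 2)
          calc (cls j).card ≤ Fintype.card (Fin k → Bool) := Finset.card_le_univ _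
            _ = 2 ^ k := by simp
  · -- correlation
    have hdisj : ((Finset.univ : Finset (Fin k)) : Set (Fin k)).PairwiseDisjoint cls := by
      intro i _ j _ hij
      rw [Function.onFun, Finset.disjoint_left]
      intro ε hεi hεj
      obtain ⟨h1i, h2i⟩ := (Finset.mem_filter.mp hεi).2
      obtain ⟨h1j, h2j⟩ := (Finset.mem_filter.mp hεj).2
      rcases lt_or_gt_of_ne hij with h | h
      · exact absurd h1i (by simp [h2j i h])
      · exact absurd h1j (by simp [h2i j h])
    have hcover : Finset.univ.biUnion cls
        = Finset.univ.erase (fun _ : Fin k => false) := by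
      ext ε
      simp only [Finset.mem_biUnion, Finset.mem_erase, Finset.mem_univ, and_true, true_and,
        hcls, Finset.mem_filter]
      constructor
      · rintro ⟨j, hj1, hj2⟩
        intro h
        rw [h] at hj1
        exact Bool.false_ne_true hj1
      · intro hne
        have hne' : ∃ j, ε j = true := by
          by_contra hall
          push_neg at hall
          exact hne (funext fun j => by simpa using hall j)
        set T := Finset.univ.filter (fun j => ε j = true) with hT
        have hTne : T.Nonempty := ⟨hne'.choose, by simp [hT, hne'.choose_spec]⟩
        refine ⟨T.min' hTne, (Finset.mem_filter.mp (T.min'_mem hTne)).2, ?_⟩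
        intro j' hj'
        by_contra hb
        have hεj' : ε j' = true := by simpa using hb
        have hj'T : j' ∈ T := by
          simp only [hT, Finset.mem_filter, Finset.mem_univ, true_and]
          exact hεj'
        exact absurd hj' (not_lt.mpr (T.min'_le j' hj'T))
    have hfull : ∀ x : Fin k → X,
        H x * ∏ j, (∏ ε ∈ cls j, H (mix ε x))
          = ∏ ε : Fin k → Bool, H (mix ε x) := by
      intro x
      have h1 : ∏ j, ∏ ε ∈ cls j, H (mix ε x)
          = ∏ ε ∈ Finset.univ.erase (fun _ : Fin k => false), H (mix ε x) := by
        rw [← hcover, Finset.prod_biUnion hdisj]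
      have h2 : mix (fun _ => false) x = x := by
        funext j
        simp [hmix]
      calc H x * ∏ j, ∏ ε ∈ cls j, H (mix ε x)
          = H (mix (fun _ => false) x) * ∏ ε ∈ Finset.univ.erase (fun _ : Fin k => false),
              H (mix ε x) := by rw [h1, h2]
        _ = ∏ ε : Fin k → Bool, H (mix ε x) :=
            Finset.mul_prod_erase Finset.univ (fun ε => H (mix ε x))
              (Finset.mem_univ (fun _ => false))
    calc (N:ℝ) * δ
        ≤ |∑ x : Fin k → X, ∏ ε : Fin k → Bool, H (mix ε x)| := le_of_lt hy₀
      _ = |∑ x : Fin k → X, H x * ∏ j, (∏ ε ∈ cls j, H (mix ε x))| := by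
          rw [Finset.sum_congr rfl fun x _ => (hfull x).symm]

/-- Bound constant `B = 2^{2^k} + 1`. -/
noncomputable def thB (k : ℕ) : ℝ := 2 ^ (2 ^ k) + 1

/-- Discretisation width. -/
noncomputable def thθ (k : ℕ) (δ : ℝ) : ℝ := δ / (4 * (k + 1) * thB k ^ k)

noncomputable def thL0 (k : ℕ) (δ : ℝ) : ℕ := ⌈(2:ℝ) ^ (2 ^ k) / thθ k δ⌉₊ + 1

/-- Number of levels, i.e. the factor by which partitions grow at each step. -/
noncomputable def thL (k : ℕ) (δ : ℝ) : ℕ := 2 * thL0 k δ + 1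

/-- Energy increment. -/
noncomputable def thη (k : ℕ) (δ : ℝ) : ℝ := δ ^ 2 / (4 * thB k ^ (2 * k))

lemma thB_ge_one (k : ℕ) : 1 ≤ thB k := by
  have : (0:ℝ) < 2 ^ (2 ^ k) := by positivity
  unfold thB; linarith

lemma thB_pos (k : ℕ) : 0 < thB k := lt_of_lt_of_le one_pos (thB_ge_one k)

lemma thθ_pos (k : ℕ) {δ : ℝ} (hδ : 0 < δ) : 0 < thθ k δ := by
  unfold thθ
  have h1 : (0:ℝ) < thB k ^ k := pow_pos (thB_pos k) k
  positivity

lemma thθ_le_one (k : ℕ) {δ : ℝ} (hδ0 : 0 < δ) (hδ1 : δ ≤ 1) : thθ k δ ≤ 1 := by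
  unfold thθ
  have h1 : (1:ℝ) ≤ thB k ^ k := one_le_pow₀ (thB_ge_one k)
  have h2 : (4:ℝ) ≤ 4 * (k + 1) * thB k ^ k := by nlinarith [Nat.cast_nonneg (α := ℝ) k]
  rw [div_le_one (by linarith)]
  linarith

lemma thη_pos (k : ℕ) {δ : ℝ} (hδ : 0 < δ) : 0 < thη k δ := by
  unfold thη
  have h1 : (0:ℝ) < thB k ^ (2 * k) := pow_pos (thB_pos k) _
  positivity

lemma increment {k : ℕ} {X : Type} [Fintype X] [Nonempty X]
    (F : (Fin k → X) → ℝ) (hF : ∀ x, |F x| ≤ 1)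
    {δ : ℝ} (hδ0 : 0 < δ) (hδ1 : δ ≤ 1) (m : ℕ)
    (c : Fin k → (Fin k → X) → ℕ)
    (hcm : ∀ j x, c j x < m)
    (hc : ∀ j x y, (∀ j', j' ≠ j → x j' = y j') → c j x = c j y)
    (hbox : δ < |boxPow (fun _ : Fin k => X)
      (fun x => F x - cphi F (fun z i => c i z) (fun i => c i x))|) :
    ∃ c' : Fin k → (Fin k → X) → ℕ,
      (∀ j x, c' j x < m * thL k δ) ∧
      (∀ j x y, (∀ j', j' ≠ j → x j' = y j') → c' j x = c' j y) ∧
      ∑ x, (cphi F (fun z i => c i z) (fun i => c i x)) ^ 2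
          + (Fintype.card (Fin k → X) : ℝ) * thη k δ
        ≤ ∑ x, (cphi F (fun z i => c' i z) (fun i => c' i x)) ^ 2 := by
  classical
  set N : ℕ := Fintype.card (Fin k → X) with hN
  have hN0 : 0 < N := Fintype.card_pos
  have hN0' : (0:ℝ) < N := by exact_mod_cast hN0
  set Fs : (Fin k → X) → ℝ := fun x => cphi F (fun z i => c i z) (fun i => c i x) with hFs
  have hFs1 : ∀ x, |Fs x| ≤ 1 := fun x => cphi_abs_le hF (fun z i => c i z) x
  set H : (Fin k → X) → ℝ := fun x => F x - Fs x with hH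
  have hH2 : ∀ x, |H x| ≤ 2 := by
    intro x
    have h1 := hF x; have h2 := hFs1 x
    calc |H x| = |F x - Fs x| := rfl
      _ ≤ |F x| + |Fs x| := abs_sub _ _
      _ ≤ 2 := by linarith
  obtain ⟨u, hu_ind, hu_bd, hu_cor⟩ := extraction H hH2 hδ0 hbox
  set θ : ℝ := thθ k δ with hθdef
  have hθ0 : 0 < θ := thθ_pos k hδ0
  have hθ1 : θ ≤ 1 := thθ_le_one k hδ0 hδ1
  set L0 : ℕ := thL0 k δ with hL0def
  set L : ℕ := thL k δ with hLdef
  -- discretisation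
  set e : Fin k → (Fin k → X) → ℕ := fun j x => (⌊u j x / θ⌋ + L0).toNat with hedef
  set ut : Fin k → (Fin k → X) → ℝ := fun j x => θ * (⌊u j x / θ⌋ : ℝ) with hutdef
  have hfl_lb : ∀ j x, -(L0:ℤ) ≤ ⌊u j x / θ⌋ := by
    intro j x
    rw [Int.le_floor]
    have h1 : -((2:ℝ) ^ (2 ^ k)) ≤ u j x := neg_le_of_abs_le (hu_bd j x)
    have h2 : (2:ℝ) ^ (2 ^ k) / θ ≤ L0 := by
      rw [hL0def]
      unfold thL0
      push_cast
      have := Nat.le_ceil ((2:ℝ) ^ (2 ^ k) / thθ k δ)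
      rw [← hθdef] at this
      linarith
    push_cast
    rw [le_div_iff₀ hθ0, neg_mul]
    rw [div_le_iff₀ hθ0] at h2
    nlinarith
  have hfl_ub : ∀ j x, (⌊u j x / θ⌋ : ℝ) ≤ (L0 : ℝ) := by
    intro j x
    have h1 : u j x ≤ (2:ℝ) ^ (2 ^ k) := le_of_abs_le (hu_bd j x)
    have h2 : (2:ℝ) ^ (2 ^ k) / θ ≤ L0 := by
      rw [hL0def]; unfold thL0; push_cast
      have := Nat.le_ceil ((2:ℝ) ^ (2 ^ k) / thθ k δ)
      rw [← hθdef] at this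
      linarith
    calc (⌊u j x / θ⌋ : ℝ) ≤ u j x / θ := Int.floor_le _
      _ ≤ (2:ℝ) ^ (2 ^ k) / θ := by gcongr
      _ ≤ L0 := h2
  have hL_pos : 0 < L := by rw [hLdef]; unfold thL; omega
  have he_cast : ∀ j x, (e j x : ℤ) = ⌊u j x / θ⌋ + L0 := by
    intro j x
    rw [hedef]
    exact Int.toNat_of_nonneg (by linarith [hfl_lb j x])
  have he_lt : ∀ j x, e j x < L := by
    intro j x
    have h1 : (⌊u j x / θ⌋ : ℤ) ≤ (L0 : ℤ) := by exact_mod_cast hfl_ub j x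
    have h2 : (e j x : ℤ) < (L : ℤ) := by
      rw [he_cast j x, hLdef]
      unfold thL
      push_cast
      omega
    exact_mod_cast h2
  have hut_close : ∀ j x, |ut j x - u j x| ≤ θ := by
    intro j x
    rw [abs_le]
    have h1 : (⌊u j x / θ⌋ : ℝ) ≤ u j x / θ := Int.floor_le _
    have h2 : u j x / θ < (⌊u j x / θ⌋ : ℝ) + 1 := Int.lt_floor_add_one _
    rw [le_div_iff₀ hθ0] at h1
    rw [div_lt_iff₀ hθ0] at h2
    constructor
    · rw [hutdef]; simp only; nlinarith
    · rw [hutdef]; simp only; nlinarith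
  have hut_bd : ∀ j x, |ut j x| ≤ thB k := by
    intro j x
    have h1 := hut_close j x
    have h2 := hu_bd j x
    unfold thB
    have := abs_sub_abs_le_abs_sub (ut j x) (u j x)
    linarith [abs_le.mp h1, abs_sub (ut j x) (u j x)]
  have hut_e : ∀ j x, ut j x = θ * ((e j x : ℝ) - (L0 : ℝ)) := by
    intro j x
    have h1 : ((e j x : ℤ) : ℝ) = ((⌊u j x / θ⌋ + L0 : ℤ) : ℝ) := by rw [he_cast j x]
    push_cast at h1
    rw [hutdef]
    simp only
    rw [show ((e j x : ℝ) - (L0:ℝ)) = (⌊u j x / θ⌋ : ℝ) by linarith]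
  have hut_ind : ∀ j x y, (∀ j', j' ≠ j → x j' = y j') → ut j x = ut j y := by
    intro j x y hxy
    rw [hutdef]; simp only [hu_ind j x y hxy]
  -- the new colouring
  set c' : Fin k → (Fin k → X) → ℕ := fun j x => e j x + c j x * L with hc'def
  have hc'_lt : ∀ j x, c' j x < m * L := by
    intro j x
    have h1 := he_lt j x
    have h2 := hcm j x
    calc c' j x = e j x + c j x * L := rfl
      _ < L + c j x * L := by omega
      _ = (c j x + 1) * L := by ring
      _ ≤ m * L := Nat.mul_le_mul_right L (by omega)
  have hc'_ind : ∀ j x y, (∀ j', j' ≠ j → x j' = y j') → c' j x = c' j y := by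
    intro j x y hxy
    rw [hc'def]
    simp only
    rw [hc j x y hxy]
    congr 1
    rw [hedef]; simp only [hu_ind j x y hxy]
  -- the test function g
  set g : (Fin k → X) → ℝ := fun x => ∏ j, ut j x with hgdef
  have hg_bd : ∀ x, |g x| ≤ thB k ^ k := by
    intro x
    rw [hgdef]; simp only [Finset.abs_prod]
    calc ∏ j, |ut j x| ≤ ∏ _j : Fin k, thB k :=
          Finset.prod_le_prod (fun _ _ => abs_nonneg _) (fun j _ => hut_bd j x)
      _ = thB k ^ k := by rw [Finset.prod_const, Finset.card_univ, Fintype.card_fin]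
  have hdiff : ∀ x, |g x - ∏ j, u j x| ≤ (k : ℝ) * θ * thB k ^ k := by
    intro x
    have hb2 : ∀ j : Fin k, j ∈ Finset.univ → |u j x| ≤ thB k := fun j _ => by
      have := hu_bd j x; unfold thB; linarith
    have := abs_prod_sub_prod_le Finset.univ (fun j => ut j x) (fun j => u j x)
      (thB_ge_one k) (fun j _ => hut_bd j x) hb2
    rw [Finset.card_univ, Fintype.card_fin] at this
    calc |g x - ∏ j, u j x| ≤ (∑ j, |ut j x - u j x|) * thB k ^ k := this
      _ ≤ ((k : ℝ) * θ) * thB k ^ k := by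
          have hsum : ∑ j, |ut j x - u j x| ≤ ∑ _j : Fin k, θ :=
            Finset.sum_le_sum fun j _ => hut_close j x
          rw [Finset.sum_const, Finset.card_univ, Fintype.card_fin, nsmul_eq_mul] at hsum
          have : (0:ℝ) ≤ thB k ^ k := le_of_lt (pow_pos (thB_pos k) k)
          nlinarith
  have hBk_pos : (0:ℝ) < thB k ^ k := pow_pos (thB_pos k) k
  have hθB : θ * thB k ^ k = δ / (4 * ((k:ℝ) + 1)) := by
    rw [hθdef]
    unfold thθ
    field_simp
  have herr : 2 * ((k:ℝ) * θ * thB k ^ k) ≤ δ / 2 := by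
    have h1 : (k:ℝ) * θ * thB k ^ k = (k:ℝ) * (δ / (4 * ((k:ℝ) + 1))) := by
      rw [mul_assoc, hθB]
    have hk0 : (0:ℝ) ≤ (k:ℝ) := Nat.cast_nonneg k
    have h4 : 2 * ((k:ℝ) * (δ / (4 * ((k:ℝ) + 1)))) = (2 * (k:ℝ) * δ) / (4 * ((k:ℝ) + 1)) := by
      ring
    rw [h1, h4, div_le_div_iff₀ (by positivity) (by norm_num)]
    nlinarith
  have hHg : (N:ℝ) * δ / 2 ≤ |∑ x, H x * g x| := by
    have h1 : |∑ x, H x * g x - ∑ x, H x * ∏ j, u j x| ≤ (N:ℝ) * (δ / 2) := by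
      rw [← Finset.sum_sub_distrib]
      calc |∑ x, (H x * g x - H x * ∏ j, u j x)|
          ≤ ∑ x, |H x * g x - H x * ∏ j, u j x| := Finset.abs_sum_le_sum_abs _ _
        _ ≤ ∑ _x : Fin k → X, (δ / 2) := by
            apply Finset.sum_le_sum
            intro x _
            have heq : H x * g x - H x * ∏ j, u j x = H x * (g x - ∏ j, u j x) := by ring
            rw [heq, abs_mul]
            have hh := hH2 x
            have hd := hdiff x
            have hab : |H x| * |g x - ∏ j, u j x| ≤ 2 * ((k:ℝ) * θ * thB k ^ k) :=
              mul_le_mul hh hd (abs_nonneg _) (by norm_num)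
            linarith
        _ = (N:ℝ) * (δ / 2) := by
            rw [Finset.sum_const, Finset.card_univ, nsmul_eq_mul]
    have h2 : |∑ x, H x * ∏ j, u j x| - |∑ x, H x * g x| ≤ (N:ℝ) * (δ / 2) :=
      le_trans (abs_sub_abs_le_abs_sub _ _) (by rw [abs_sub_comm]; exact h1)
    have h3 := hu_cor
    have : (N:ℝ) * δ / 2 = (N:ℝ) * δ - (N:ℝ) * (δ / 2) := by ring
    linarith
  -- g is measurable with respect to the joint refined colouring
  set ψ : (Fin k → ℕ) → ℝ := fun t => ∏ j, θ * (((t j % L : ℕ) : ℝ) - (L0 : ℝ)) with hψdef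
  have hgψ : ∀ x, g x = ψ (fun i => c' i x) := by
    intro x
    rw [hgdef, hψdef]
    simp only
    refine Finset.prod_congr rfl fun j _ => ?_
    have hmod : c' j x % L = e j x := by
      rw [hc'def]
      simp only
      rw [Nat.add_mul_mod_self_right, Nat.mod_eq_of_lt (he_lt j x)]
    rw [hmod, hut_e j x]
  -- orthogonality
  set Fs' : (Fin k → X) → ℝ := fun x => cphi F (fun z i => c' i z) (fun i => c' i x) with hFs'
  have horth : ∑ x, H x * g x = ∑ x, (Fs' x - Fs x) * g x := by
    have hproj' : ∑ x, Fs' x * g x = ∑ x, F x * g x := by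
      have := cphi_proj F (fun z i => c' i z) ψ
      calc ∑ x, Fs' x * g x = ∑ x, cphi F (fun z i => c' i z) ((fun z i => c' i z) x)
            * ψ ((fun z i => c' i z) x) := by
            refine Finset.sum_congr rfl fun x _ => ?_
            rw [hFs', hgψ x]
        _ = ∑ x, F x * ψ ((fun z i => c' i z) x) := this
        _ = ∑ x, F x * g x := by
            refine Finset.sum_congr rfl fun x _ => ?_
            rw [hgψ x]
    calc ∑ x, H x * g x = ∑ x, (F x * g x - Fs x * g x) := by
          refine Finset.sum_congr rfl fun x _ => ?_
          rw [hH]; ring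
      _ = ∑ x, F x * g x - ∑ x, Fs x * g x := Finset.sum_sub_distrib _ _
      _ = ∑ x, Fs' x * g x - ∑ x, Fs x * g x := by rw [hproj']
      _ = ∑ x, (Fs' x - Fs x) * g x := by
          rw [← Finset.sum_sub_distrib]
          exact Finset.sum_congr rfl fun x _ => by ring
  -- Cauchy–Schwarz gives the energy gap
  have hCS := Finset.sum_mul_sq_le_sq_mul_sq Finset.univ (fun x => Fs' x - Fs x) g
  have hg2 : ∑ x, g x ^ 2 ≤ (N:ℝ) * (thB k ^ k) ^ 2 := by
    calc ∑ x, g x ^ 2 ≤ ∑ _x : Fin k → X, (thB k ^ k) ^ 2 := by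
          apply Finset.sum_le_sum
          intro x _
          have := hg_bd x
          have h0 : (0:ℝ) ≤ |g x| := abs_nonneg _
          calc g x ^ 2 = |g x| ^ 2 := (sq_abs _).symm
            _ ≤ (thB k ^ k) ^ 2 := by nlinarith
      _ = (N:ℝ) * (thB k ^ k) ^ 2 := by
          rw [Finset.sum_const, Finset.card_univ, nsmul_eq_mul]
  have hD2 : (N:ℝ) * thη k δ ≤ ∑ x, (Fs' x - Fs x) ^ 2 := by
    have h1 : ((N:ℝ) * δ / 2) ^ 2 ≤ (∑ x, (Fs' x - Fs x) * g x) ^ 2 := by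
      rw [← horth]
      have h2 : (N:ℝ) * δ / 2 ≤ |∑ x, H x * g x| := hHg
      have h3 : (0:ℝ) ≤ (N:ℝ) * δ / 2 := by positivity
      calc ((N:ℝ) * δ / 2) ^ 2 ≤ |∑ x, H x * g x| ^ 2 := pow_le_pow_left₀ h3 h2 2
        _ = (∑ x, H x * g x) ^ 2 := sq_abs _
    have h4 : (∑ x, (Fs' x - Fs x) * g x) ^ 2
        ≤ (∑ x, (Fs' x - Fs x) ^ 2) * ((N:ℝ) * (thB k ^ k) ^ 2) := by
      refine le_trans hCS ?_
      have hD2nn : (0:ℝ) ≤ ∑ x, (Fs' x - Fs x) ^ 2 :=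
        Finset.sum_nonneg fun x _ => sq_nonneg _
      exact mul_le_mul_of_nonneg_left hg2 hD2nn
    have h5 : ((N:ℝ) * δ / 2) ^ 2 = (N:ℝ) * ((N:ℝ) * (δ ^ 2 / 4)) := by ring
    have hBkk : (0:ℝ) < (thB k ^ k) ^ 2 := by positivity
    -- (N δ/2)^2 ≤ S * N * B^{2k}  ⟹  N * δ^2/(4 B^{2k}) ≤ S
    have h6 : (N:ℝ) * ((N:ℝ) * (δ ^ 2 / 4))
        ≤ (∑ x, (Fs' x - Fs x) ^ 2) * ((N:ℝ) * (thB k ^ k) ^ 2) := by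
      rw [← h5]; exact le_trans h1 h4
    have hηeq : thη k δ = (δ ^ 2 / 4) / (thB k ^ k) ^ 2 := by
      unfold thη
      rw [← pow_mul]
      ring
    have h8 : (N:ℝ) * ((N:ℝ) * (δ ^ 2 / 4))
        ≤ (N:ℝ) * ((∑ x, (Fs' x - Fs x) ^ 2) * (thB k ^ k) ^ 2) := by
      calc (N:ℝ) * ((N:ℝ) * (δ ^ 2 / 4))
          ≤ (∑ x, (Fs' x - Fs x) ^ 2) * ((N:ℝ) * (thB k ^ k) ^ 2) := h6
        _ = (N:ℝ) * ((∑ x, (Fs' x - Fs x) ^ 2) * (thB k ^ k) ^ 2) := by ring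
    have h9 := le_of_mul_le_mul_left h8 hN0'
    rw [hηeq, show (N:ℝ) * (δ ^ 2 / 4 / (thB k ^ k) ^ 2)
      = ((N:ℝ) * (δ ^ 2 / 4)) / (thB k ^ k) ^ 2 from by ring, div_le_iff₀ hBkk]
    exact h9
  -- Pythagoras
  have hR : ∀ x : Fin k → X, (fun i => c i x) = (fun t i => t i / L) (fun i => c' i x) := by
    intro x
    funext i
    simp only
    rw [hc'def]
    simp only
    rw [Nat.add_mul_div_right _ _ hL_pos, Nat.div_eq_of_lt (he_lt i x)]
    omega
  have hpyth := cphi_pythagoras F (fun z i => c i z) (fun z i => c' i z)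
    (fun t i => t i / L) hR
  refine ⟨c', ?_, hc'_ind, ?_⟩
  · intro j x
    have := hc'_lt j x
    rwa [hLdef] at this
  · have hmono : ∑ x, (Fs x) ^ 2 + (N:ℝ) * thη k δ ≤ ∑ x, (Fs' x) ^ 2 := by
      rw [hpyth]
      have := hD2
      linarith
    exact hmono

/-- Weak (weighted) hypergraph regularity lemma: every `F : X^k → [−1,1]` splits as
`F = F_s + F_u` where `F_s` is measurable with respect to the join of `k` partitions,
each with at most `M = M(k,ε)` atoms and independent of one coordinate (encoded by
colourings `π j : X^k → Fin M` not depending on the `j`-th coordinate), `‖F_u‖_{□^k} ≤ ε`,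
and both parts are bounded by `2`. -/
theorem weak_regularity (k : ℕ) (ε : ℝ) (hε : 0 < ε) :
    ∃ M : ℕ, 0 < M ∧ ∀ (X : Type) [Fintype X] [Nonempty X],
      ∀ F : (Fin k → X) → ℝ, (∀ x, F x ∈ Set.Icc (-1 : ℝ) 1) →
        ∃ Fs Fu : (Fin k → X) → ℝ,
          (∀ x, F x = Fs x + Fu x) ∧
          (∃ (π : Fin k → (Fin k → X) → Fin M) (φ : (Fin k → Fin M) → ℝ),
            (∀ j : Fin k, ∀ x y : Fin k → X,
              (∀ j' : Fin k, j' ≠ j → x j' = y j') → π j x = π j y) ∧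
            (∀ x, Fs x = φ (fun j => π j x))) ∧
          boxNorm (fun _ : Fin k => X) Fu ≤ ε ∧
          (∀ x, |Fs x| ≤ 2) ∧ (∀ x, |Fu x| ≤ 2) := by
  classical
  set ε' : ℝ := min ε 1 with hε'def
  have hε'0 : 0 < ε' := lt_min hε one_pos
  have hε'1 : ε' ≤ 1 := min_le_right _ _
  set δ : ℝ := ε' ^ (2 ^ k) with hδdef
  have hδ0 : 0 < δ := pow_pos hε'0 _
  have hδ1 : δ ≤ 1 := pow_le_one₀ (le_of_lt hε'0) hε'1
  set η : ℝ := thη k δ with hηdef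
  have hη0 : 0 < η := thη_pos k hδ0
  set T : ℕ := ⌈1 / η⌉₊ with hTdef
  have hTη : 1 ≤ (T:ℝ) * η := by
    have h1 : 1 / η ≤ (T:ℝ) := Nat.le_ceil _
    have := mul_le_mul_of_nonneg_right h1 (le_of_lt hη0)
    rwa [one_div, inv_mul_cancel₀ (ne_of_gt hη0)] at this
  have hL1 : 1 ≤ thL k δ := by unfold thL; omega
  refine ⟨thL k δ ^ T, pow_pos hL1 T, ?_⟩
  intro X _ _ F hF
  have hF1 : ∀ x, |F x| ≤ 1 := fun x => abs_le.mpr ⟨(hF x).1, (hF x).2⟩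
  set N : ℕ := Fintype.card (Fin k → X) with hN
  have hN0' : (0:ℝ) < N := by exact_mod_cast (Fintype.card_pos : 0 < N)
  have hEle : ∀ c : Fin k → (Fin k → X) → ℕ,
      ∑ x, (cphi F (fun z i => c i z) (fun i => c i x)) ^ 2 ≤ (N:ℝ) := by
    intro c
    calc ∑ x, (cphi F (fun z i => c i z) (fun i => c i x)) ^ 2
        ≤ ∑ _x : Fin k → X, (1:ℝ) := by
          apply Finset.sum_le_sum
          intro x _
          have h1 : |cphi F (fun z i => c i z) ((fun z i => c i z) x)| ≤ 1 :=
            cphi_abs_le hF1 (fun z i => c i z) x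
          calc (cphi F (fun z i => c i z) (fun i => c i x)) ^ 2
              = |cphi F (fun z i => c i z) (fun i => c i x)| ^ 2 := (sq_abs _).symm
            _ ≤ 1 := by nlinarith [abs_nonneg (cphi F (fun z i => c i z) (fun i => c i x))]
      _ = (N:ℝ) := by rw [Finset.sum_const, Finset.card_univ, nsmul_eq_mul, mul_one]
  have key : ∀ n : ℕ, ∀ (m : ℕ) (c : Fin k → (Fin k → X) → ℕ),
      (∀ j x, c j x < m) →
      (∀ j x y, (∀ j', j' ≠ j → x j' = y j') → c j x = c j y) →
      ((N:ℝ) * (1 - n * η) ≤ ∑ x, (cphi F (fun z i => c i z) (fun i => c i x)) ^ 2) →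
      ∃ c' : Fin k → (Fin k → X) → ℕ,
        (∀ j x, c' j x < m * thL k δ ^ n) ∧
        (∀ j x y, (∀ j', j' ≠ j → x j' = y j') → c' j x = c' j y) ∧
        |boxPow (fun _ : Fin k => X)
          (fun x => F x - cphi F (fun z i => c' i z) (fun i => c' i x))| ≤ δ := by
    intro n
    induction n with
    | zero =>
      intro m c hcm hci hce
      by_cases hb : |boxPow (fun _ : Fin k => X)
          (fun x => F x - cphi F (fun z i => c i z) (fun i => c i x))| ≤ δ
      · exact ⟨c, by simpa using hcm, hci, hb⟩
      · exfalso
        push_neg at hb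
        obtain ⟨c', -, -, hinc⟩ := increment F hF1 hδ0 hδ1 m c hcm hci hb
        have h1 := hEle c'
        have h2 := hEle c
        simp only [Nat.cast_zero, zero_mul, mul_zero, sub_zero, mul_one] at hce
        have hNη : 0 < (N:ℝ) * η := mul_pos hN0' hη0
        rw [← hηdef] at hinc
        linarith
    | succ n ih =>
      intro m c hcm hci hce
      by_cases hb : |boxPow (fun _ : Fin k => X)
          (fun x => F x - cphi F (fun z i => c i z) (fun i => c i x))| ≤ δ
      · refine ⟨c, fun j x => lt_of_lt_of_le (hcm j x) ?_, hci, hb⟩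
        calc m = m * 1 := (mul_one m).symm
          _ ≤ m * thL k δ ^ (n + 1) := Nat.mul_le_mul_left m (Nat.one_le_pow _ _ hL1)
      · push_neg at hb
        obtain ⟨c'', hc''m, hc''i, hinc⟩ := increment F hF1 hδ0 hδ1 m c hcm hci hb
        rw [← hηdef] at hinc
        have hce' : (N:ℝ) * (1 - n * η)
            ≤ ∑ x, (cphi F (fun z i => c'' i z) (fun i => c'' i x)) ^ 2 := by
          have hcast : ((n + 1 : ℕ) : ℝ) = (n:ℝ) + 1 := by push_cast; ring
          rw [hcast] at hce
          nlinarith [hce, hinc]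
        obtain ⟨c', h1, h2, h3⟩ := ih (m * thL k δ) c'' hc''m hc''i hce'
        refine ⟨c', fun j x => ?_, h2, h3⟩
        have := h1 j x
        calc c' j x < m * thL k δ * thL k δ ^ n := this
          _ = m * thL k δ ^ (n + 1) := by ring
  have hstart : (N:ℝ) * (1 - T * η)
      ≤ ∑ x, (cphi F (fun z i => (fun (_ : Fin k) (_ : Fin k → X) => (0:ℕ)) i z) (fun i => (fun (_ : Fin k) (_ : Fin k → X) => (0:ℕ)) i x)) ^ 2 := by
    have h1 : (N:ℝ) * (1 - T * η) ≤ 0 := by nlinarith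
    have h2 : (0:ℝ) ≤ ∑ x : Fin k → X,
        (cphi F (fun z i => (fun (_ : Fin k) (_ : Fin k → X) => (0:ℕ)) i z) (fun i => (fun (_ : Fin k) (_ : Fin k → X) => (0:ℕ)) i x)) ^ 2 :=
      Finset.sum_nonneg fun x _ => sq_nonneg _
    linarith
  obtain ⟨c, hcm, hci, hbox⟩ := key T 1 (fun (_ : Fin k) (_ : Fin k → X) => (0:ℕ))
    (fun j x => Nat.zero_lt_one) (fun _ _ _ _ => rfl) hstart
  simp only [one_mul] at hcm
  set Fs : (Fin k → X) → ℝ := fun x => cphi F (fun z i => c i z) (fun i => c i x) with hFsdef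
  have hFs1 : ∀ x, |Fs x| ≤ 1 := fun x => cphi_abs_le hF1 (fun z i => c i z) x
  refine ⟨Fs, fun x => F x - Fs x, fun x => by ring, ?_, ?_, ?_, ?_⟩
  · refine ⟨fun j x => ⟨c j x, hcm j x⟩,
      fun t => cphi F (fun z i => c i z) (fun i => (t i : ℕ)), ?_, ?_⟩
    · intro j x y hxy
      exact Fin.ext (hci j x y hxy)
    · intro x
      rfl
  · -- box norm bound
    set r : ℝ := ((2:ℝ) ^ k)⁻¹ with hrdef
    have hr0 : 0 < r := by positivity
    have h1 : boxNorm (fun _ : Fin k => X) (fun x => F x - Fs x)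
        = boxPow (fun _ : Fin k => X) (fun x => F x - Fs x) ^ r := rfl
    have h2 : boxPow (fun _ : Fin k => X) (fun x => F x - Fs x) ^ r
        ≤ |boxPow (fun _ : Fin k => X) (fun x => F x - Fs x)| ^ r :=
      le_trans (le_abs_self _) (Real.abs_rpow_le_abs_rpow _ _)
    have h3 : |boxPow (fun _ : Fin k => X) (fun x => F x - Fs x)| ^ r ≤ δ ^ r :=
      Real.rpow_le_rpow (abs_nonneg _) hbox (le_of_lt hr0)
    have h4 : δ ^ r = ε' := by
      rw [hδdef, ← Real.rpow_natCast ε' (2 ^ k), ← Real.rpow_mul (le_of_lt hε'0), hrdef]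
      rw [show ((2 ^ k : ℕ) : ℝ) = (2:ℝ) ^ k by push_cast; ring]
      rw [mul_inv_cancel₀ (by positivity : ((2:ℝ) ^ k) ≠ 0), Real.rpow_one]
    calc boxNorm (fun _ : Fin k => X) (fun x => F x - Fs x)
        ≤ δ ^ r := by rw [h1]; exact le_trans h2 h3
      _ = ε' := h4
      _ ≤ ε := min_le_left _ _
  · intro x
    exact le_trans (hFs1 x) (by norm_num)
  · intro x
    calc |F x - Fs x| ≤ |F x| + |Fs x| := abs_sub _ _
      _ ≤ 2 := by linarith [hF1 x, hFs1 x]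
end

section
/- Let G be a finite D-quasirandom group, k ≥ 2, and f₁, …, f_k : G^k → [−1,1]. Define c_g = (1/|G|^k)·∑_{a⃗∈G^k} ∏_{i=1}^k f_i(g a₁, …, g a_i, a_{i+1}, …, a_k), where the i = 0 factor is omitted (f₀ ≡ 1). Then ((1/|G|)·∑_{g} |c_g|)² ≤ (1/|G|)·∑_{h∈G} (1/|G|)·∑_{g∈G} | (1/|G|^k)·∑_{a⃗∈G^k} ∏_{i=1}^k F_{i,h}(a₁, g a₂, …, g a_i, a_{i+1}, …, a_k) |, where F_{i,h}(a⃗) = f_i(a⃗)·f_i(h a₁, …, h a_i, a_{i+1}, …, a_k). -/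
/-- A finite group `G` is `D`-quasirandom if it has no nontrivial unitary
representation of dimension less than `D`. -/
def IsQuasirandom (G : Type) [Group G] (D : ℕ) : Prop :=
  ∀ n : ℕ, n < D → ∀ ρ : G →* Matrix.unitaryGroup (Fin n) ℂ, ∀ g : G, ρ g = 1

/-- Van der Corput step in the box norm estimate. Here `i : Fin k` stands for the
index `i + 1 ∈ {1,…,k}` and `j : Fin k` for the coordinate `j + 1 ∈ {1,…,k}`, so
`c_g = E_{a⃗} ∏_{i=1}^k f_i(g a₁,…,g a_i, a_{i+1},…,a_k)` and on the right-hand side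
`F_{i,h}(a⃗) = f_i(a⃗)·f_i(h a₁,…,h a_i, a_{i+1},…,a_k)` is evaluated at
`(a₁, g a₂, …, g a_i, a_{i+1}, …, a_k)`. -/
theorem van_der_corput_step (D : ℕ) (G : Type) [Group G] [Fintype G]
    (hG : IsQuasirandom G D) (k : ℕ) (hk : 2 ≤ k)
    (f : Fin k → (Fin k → G) → ℝ)
    (hf : ∀ i a, |f i a| ≤ 1)
    (c : G → ℝ)
    (hc : ∀ g : G, c g = (1 / (Fintype.card G : ℝ) ^ k) * ∑ a : Fin k → G,
      ∏ i : Fin k, f i (fun j => if (j : ℕ) ≤ (i : ℕ) then g * a j else a j)) :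
    ((1 / (Fintype.card G : ℝ)) * ∑ g : G, |c g|) ^ 2 ≤
      (1 / (Fintype.card G : ℝ)) * ∑ h : G,
        (1 / (Fintype.card G : ℝ)) * ∑ g : G,
          |(1 / (Fintype.card G : ℝ) ^ k) * ∑ a : Fin k → G,
            ∏ i : Fin k,
              (fun b : Fin k → G =>
                  f i b * f i (fun j => if (j : ℕ) ≤ (i : ℕ) then h * b j else b j))
                (fun j => if (j : ℕ) ≠ 0 ∧ (j : ℕ) ≤ (i : ℕ) then g * a j else a j)| := by
  classical
  set N : ℝ := (Fintype.card G : ℝ) with hN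
  have hNpos : 0 < N := by
    rw [hN]; exact_mod_cast Fintype.card_pos
  set P : G → (Fin k → G) → ℝ := fun g a =>
    ∏ i : Fin k, f i (fun j => if (j : ℕ) ≤ (i : ℕ) then g * a j else a j) with hP
  set Q : G → G → (Fin k → G) → ℝ := fun h g a =>
    ∏ i : Fin k,
      (fun b : Fin k → G =>
          f i b * f i (fun j => if (j : ℕ) ≤ (i : ℕ) then h * b j else b j))
        (fun j => if (j : ℕ) ≠ 0 ∧ (j : ℕ) ≤ (i : ℕ) then g * a j else a j) with hQ
  set ε : G → ℝ := fun g => if 0 ≤ c g then 1 else -1 with hε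
  have habs : ∀ g, |c g| = ε g * c g := by
    intro g
    simp only [hε]
    split_ifs with h
    · rw [abs_of_nonneg h, one_mul]
    · rw [abs_of_neg (lt_of_not_ge h)]; ring
  have hεabs : ∀ g, |ε g| = 1 := by
    intro g; simp only [hε]; split_ifs <;> simp
  -- key pointwise identity
  have hkey : ∀ (h g : G) (a : Fin k → G),
      Q h g (fun (j : Fin k) => if (j : ℕ) = 0 then g * a j else a j) = P g a * P (h * g) a := by
    intro h g a
    simp only [hQ, hP, ← Finset.prod_mul_distrib]
    refine Finset.prod_congr rfl fun i _ => ?_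
    refine congrArg₂ (· * ·) (congrArg (f i) ?_) (congrArg (f i) ?_)
    · funext j
      by_cases h0 : (j : ℕ) = 0
      · have hle : (j : ℕ) ≤ (i : ℕ) := by omega
        simp [h0, hle]
      · by_cases hle : (j : ℕ) ≤ (i : ℕ) <;> simp [h0, hle]
    · funext j
      by_cases h0 : (j : ℕ) = 0
      · have hle : (j : ℕ) ≤ (i : ℕ) := by omega
        simp [h0, hle, mul_assoc]
      · by_cases hle : (j : ℕ) ≤ (i : ℕ) <;> simp [h0, hle, mul_assoc]
  -- change of variables a₀ ↦ g * a₀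
  have hbij : ∀ g : G, Function.Bijective
      (fun (a : Fin k → G) => (fun (j : Fin k) => if (j : ℕ) = 0 then g * a j else a j)) := by
    intro g
    refine Function.bijective_iff_has_inverse.mpr
      ⟨fun a (j : Fin k) => if (j : ℕ) = 0 then g⁻¹ * a j else a j, fun a => ?_, fun a => ?_⟩ <;>
    · funext j
      by_cases h0 : (j : ℕ) = 0 <;> simp [h0]
  have hsum_a : ∀ (h g : G),
      (∑ a : Fin k → G, P g a * P (h * g) a) = ∑ a : Fin k → G, Q h g a := by
    intro h g
    exact Fintype.sum_bijective _ (hbij g) _ _ (fun a => (hkey h g a).symm)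
  -- Step A : ∑ g |c g| = (1/N^k) * ∑ a S a
  set S : (Fin k → G) → ℝ := fun a => ∑ g : G, ε g * P g a with hS
  have hA : (∑ g : G, |c g|) = (1 / N ^ k) * ∑ a : Fin k → G, S a := by
    rw [Finset.mul_sum]
    rw [show (∑ g : G, |c g|) =
        ∑ g : G, ∑ a : Fin k → G, (1 / N ^ k) * (ε g * P g a) from
      Finset.sum_congr rfl fun g _ => by
        rw [habs g, hc g, Finset.mul_sum, Finset.mul_sum]
        exact Finset.sum_congr rfl fun a _ => by ring]
    rw [Finset.sum_comm]
    exact Finset.sum_congr rfl fun a _ => by rw [hS, Finset.mul_sum]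
  -- Step C : ∑ a (S a)^2 ≤ ∑ g ∑ h |T h g|
  have hC : (∑ a : Fin k → G, S a ^ 2) ≤
      ∑ g : G, ∑ h : G, |∑ a : Fin k → G, Q h g a| := by
    have expand : ∀ a : Fin k → G,
        S a ^ 2 = ∑ g : G, ∑ g' : G, ε g * ε g' * (P g a * P g' a) := by
      intro a
      rw [sq, hS, Finset.sum_mul_sum]
      exact Finset.sum_congr rfl fun g _ => Finset.sum_congr rfl fun g' _ => by ring
    have expand2 : (∑ a : Fin k → G, S a ^ 2) =
        ∑ g : G, ∑ g' : G, ε g * ε g' * ∑ a : Fin k → G, P g a * P g' a := by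
      calc (∑ a : Fin k → G, S a ^ 2)
          = ∑ a : Fin k → G, ∑ g : G, ∑ g' : G, ε g * ε g' * (P g a * P g' a) :=
            Finset.sum_congr rfl fun a _ => expand a
        _ = ∑ g : G, ∑ a : Fin k → G, ∑ g' : G, ε g * ε g' * (P g a * P g' a) :=
            Finset.sum_comm
        _ = ∑ g : G, ∑ g' : G, ∑ a : Fin k → G, ε g * ε g' * (P g a * P g' a) :=
            Finset.sum_congr rfl fun g _ => Finset.sum_comm
        _ = ∑ g : G, ∑ g' : G, ε g * ε g' * ∑ a : Fin k → G, P g a * P g' a :=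
            Finset.sum_congr rfl fun g _ => Finset.sum_congr rfl fun g' _ =>
              (Finset.mul_sum _ _ _).symm
    rw [expand2]
    refine Finset.sum_le_sum fun g _ => ?_
    have reindex : (∑ g' : G, ε g * ε g' * ∑ a : Fin k → G, P g a * P g' a) =
        ∑ h : G, ε g * ε (h * g) * ∑ a : Fin k → G, Q h g a := by
      rw [← Equiv.sum_comp (Equiv.mulRight g)
        (fun g' => ε g * ε g' * ∑ a : Fin k → G, P g a * P g' a)]
      refine Finset.sum_congr rfl fun h _ => ?_
      simp only [Equiv.coe_mulRight]
      rw [hsum_a h g]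
    rw [reindex]
    refine Finset.sum_le_sum fun h _ => ?_
    calc ε g * ε (h * g) * ∑ a : Fin k → G, Q h g a
        ≤ |ε g * ε (h * g) * ∑ a : Fin k → G, Q h g a| := le_abs_self _
      _ = |∑ a : Fin k → G, Q h g a| := by
          rw [abs_mul, abs_mul, hεabs, hεabs, one_mul, one_mul]
  -- Step B : Cauchy-Schwarz
  have hB : (∑ a : Fin k → G, S a) ^ 2 ≤ N ^ k * ∑ a : Fin k → G, S a ^ 2 := by
    have := sq_sum_le_card_mul_sum_sq (s := (Finset.univ : Finset (Fin k → G))) (f := S)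
    have hcard : ((Finset.univ : Finset (Fin k → G)).card : ℝ) = N ^ k := by
      simp [Finset.card_univ, hN]
    calc (∑ a : Fin k → G, S a) ^ 2
        ≤ ((Finset.univ : Finset (Fin k → G)).card : ℝ) * ∑ a : Fin k → G, S a ^ 2 := this
      _ = N ^ k * ∑ a : Fin k → G, S a ^ 2 := by rw [hcard]
  -- assemble
  have hRHS : (1 / N) * ∑ h : G, (1 / N) * ∑ g : G,
      |(1 / N ^ k) * ∑ a : Fin k → G, Q h g a| =
      (1 / N) ^ 2 * (1 / N ^ k) * ∑ g : G, ∑ h : G, |∑ a : Fin k → G, Q h g a| := by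
    rw [Finset.sum_comm (f := fun g h => |∑ a : Fin k → G, Q h g a|)]
    rw [Finset.mul_sum, Finset.mul_sum]
    refine Finset.sum_congr rfl fun h _ => ?_
    rw [Finset.mul_sum, Finset.mul_sum, Finset.mul_sum]
    refine Finset.sum_congr rfl fun g _ => ?_
    rw [abs_mul, abs_of_nonneg (by positivity : (0:ℝ) ≤ 1 / N ^ k)]
    ring
  rw [hRHS]
  rw [hA]
  have hSnonneg : (0:ℝ) ≤ (1/N) ^ 2 * (1/N^k) ^ 2 := by positivity
  calc ((1 / N) * ((1 / N ^ k) * ∑ a : Fin k → G, S a)) ^ 2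
      = (1/N) ^ 2 * (1/N^k) ^ 2 * (∑ a : Fin k → G, S a) ^ 2 := by ring
    _ ≤ (1/N) ^ 2 * (1/N^k) ^ 2 * (N ^ k * ∑ a : Fin k → G, S a ^ 2) :=
        mul_le_mul_of_nonneg_left hB hSnonneg
    _ = (1/N) ^ 2 * (1/N^k) * ∑ a : Fin k → G, S a ^ 2 := by
        field_simp
    _ ≤ (1/N) ^ 2 * (1/N^k) * ∑ g : G, ∑ h : G, |∑ a : Fin k → G, Q h g a| := by
        refine mul_le_mul_of_nonneg_left hC (by positivity)
end

section
/- Let G be a finite group, k ≥ 1, and for i = 1, …, k let T_i denote the action of G on G^k given by T_i^g(a₁,…,a_k) = (a₁,…,a_{i−1}, g a_i, a_{i+1},…,a_k), and write T_{(j,k]}^g = T_{j+1}^g ⋯ T_k^g. Let N_k be the change-of-variables operator sending f : G^k → ℝ to the function N_k f on G^{k+1} with (N_k f)(x₀,…,x_k) = f(g a₁, …, g a_k) under x₀ = g a₁, x_j = a_j⁻¹ a_{j+1}, x_k = a_k⁻¹. If F : G^{k+1} → ℝ does not depend on the j-th and k-th coordinates (for some 0 ≤ j ≤ k−1), then the function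 N_k^{−1} F : G^k → ℝ is invariant under the action T_{(j,k]}, i.e., (N_k^{−1}F)(T_{j+1}^g ⋯ T_k^g a⃗) = (N_k^{−1}F)(a⃗) for all g ∈ G and a⃗ ∈ G^k. -/
/-- The inverse change-of-variables operator `N_k⁻¹`: for `F : G^{k+1} → ℝ` not
depending on the `k`-th coordinate, `(N_k⁻¹ F)(b₁,…,b_k) = F(x₀,…,x_k)` where
`x₀ = b₁`, `x_m = b_m⁻¹ b_{m+1}` for `1 ≤ m ≤ k−1`, and `x_k` is set to `1`
(irrelevant, as `F` does not depend on it). Here `b_m = g a_m`, so that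
`N_k⁻¹ (N_k f) = f` for the change of variables `x₀ = g a₁`, `x_m = a_m⁻¹ a_{m+1}`,
`x_k = a_k⁻¹`. -/
def Ninv {k : ℕ} {G : Type} [Group G] (hk : 1 ≤ k)
    (F : (Fin (k + 1) → G) → ℝ) : (Fin k → G) → ℝ :=
  fun b => F (fun t : Fin (k + 1) =>
    if _ : (t : ℕ) = 0 then b ⟨0, hk⟩
    else if _ : (t : ℕ) = k then 1
    else (b ⟨(t : ℕ) - 1, by have := t.isLt; omega⟩)⁻¹ *
      b ⟨(t : ℕ), by have := t.isLt; omega⟩)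

/-- If `F : G^{k+1} → ℝ` does not depend on the `j`-th and `k`-th coordinates
(for some `0 ≤ j ≤ k−1`), then `N_k⁻¹ F` is invariant under the action
`T_{(j,k]}^g = T_{j+1}^g ⋯ T_k^g`, which multiplies the (1-indexed) coordinates
`j+1, …, k` (0-indexed coordinates `m ≥ j`) by `g` on the left. -/
theorem Ninv_invariant (G : Type) [Group G] (k : ℕ) (hk : 1 ≤ k)
    (j : ℕ) (hj : j ≤ k - 1)
    (F : (Fin (k + 1) → G) → ℝ)
    (hF : ∀ x y : Fin (k + 1) → G,
      (∀ t : Fin (k + 1), (t : ℕ) ≠ j → (t : ℕ) ≠ k → x t = y t) → F x = F y) :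
    ∀ (g : G) (b : Fin k → G),
      Ninv hk F (fun m : Fin k => if j ≤ (m : ℕ) then g * b m else b m) =
        Ninv hk F b := by
  intro g b
  unfold Ninv
  apply hF
  intro t htj htk
  have hlt := t.isLt
  by_cases h0 : (t : ℕ) = 0
  · simp only [h0, dif_pos]
    have : ¬ j ≤ 0 := by omega
    simp [this]
  · rw [dif_neg h0, dif_neg h0, dif_neg htk, dif_neg htk]
    by_cases hle : j ≤ (t : ℕ) - 1
    · have h1 : j ≤ (t : ℕ) := by omega
      simp only [if_pos hle, if_pos h1, mul_inv_rev]
      group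
    · have h1 : ¬ j ≤ (t : ℕ) := by omega
      simp [hle, h1]
end

section
/- Let G be a finite group, A ⊆ G^k, and define a (k+1)-partite k-uniform hypergraph F on vertex sets X₀ = ⋯ = X_k = G by declaring, for each i ∈ {0,…,k}, the edge (x₀,…,x_{i−1},x_{i+1},…,x_k) ∈ F_i if and only if (g a₁, …, g a_{i−1}, a_i, …, a_k) ∈ A, where (g, a₁,…,a_k) is recovered from (x₀,…,x_k) by the change of variables x₀ = g a₁, x_j = a_j⁻¹ a_{j+1}, x_k = a_k⁻¹. Then simplices of F (i.e., tuples (x₀,…,x_k) all of whose k+1 sub-tuples omitting one coordinate are edges of the respective F_i) are in one-to-one correspondence with pairs (g, a⃗) ∈ G^{k+1} such that the corner C(g, a⃗) is contained in A. -/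
/-- Extension of `x : Fin (k+1) → G` to `ℕ → G` by `1`. -/
def ext {k : ℕ} {G : Type} [Group G] (x : Fin (k + 1) → G) : ℕ → G :=
  fun t => if h : t < k + 1 then x ⟨t, h⟩ else 1

/-- Ordered product `x₀ x₁ ⋯ x_{n−1}`. -/
def prodRange {k : ℕ} {G : Type} [Group G] (x : Fin (k + 1) → G) (n : ℕ) : G :=
  ((List.range n).map (ext x)).prod

/-- Ordered product `x_m x_{m+1} ⋯ x_k`. -/
def prodIco {k : ℕ} {G : Type} [Group G] (x : Fin (k + 1) → G) (m : ℕ) : G :=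
  ((List.Ico m (k + 1)).map (ext x)).prod

/-- The point `(g a₁,…,g a_{i},a_{i+1},…,a_k)` recovered from `(x₀,…,x_k)` via the
change of variables `x₀ = g a₁`, `x_j = a_j⁻¹ a_{j+1}`, `x_k = a_k⁻¹`; it does not
depend on the coordinate `x_i`, so membership of this point in `A` defines the edge
set `F_i` of a `(k+1)`-partite `k`-uniform hypergraph. -/
def cornerPoint {k : ℕ} {G : Type} [Group G] (i : Fin (k + 1))
    (x : Fin (k + 1) → G) : Fin k → G :=
  fun j => if (j : ℕ) < (i : ℕ) then prodRange x ((j : ℕ) + 1)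
    else (prodIco x ((j : ℕ) + 1))⁻¹

namespace CornerAux

variable {k : ℕ} {G : Type} [Group G]

lemma prodIco_eq_one (x : Fin (k + 1) → G) {m : ℕ} (h : k + 1 ≤ m) :
    prodIco x m = 1 := by
  unfold prodIco
  rw [List.Ico.eq_nil_of_le h]
  simp

lemma prodIco_succ (x : Fin (k + 1) → G) {m : ℕ} (h : m < k + 1) :
    prodIco x m = x ⟨m, h⟩ * prodIco x (m + 1) := by
  unfold prodIco
  rw [List.Ico.eq_cons h, List.map_cons, List.prod_cons, ext, dif_pos h]

lemma prodRange_eq_Ico (x : Fin (k + 1) → G) (n : ℕ) :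
    prodRange x n = ((List.Ico 0 n).map (ext x)).prod := by
  rw [prodRange, List.Ico.zero_bot]

lemma prodRange_mul_prodIco (x : Fin (k + 1) → G) {m : ℕ} (h : m ≤ k + 1) :
    prodRange x m * prodIco x m = prodRange x (k + 1) := by
  rw [prodRange_eq_Ico, prodRange_eq_Ico, prodIco, ← List.prod_append, ← List.map_append,
    List.Ico.append_consecutive (Nat.zero_le m) h]

/-- The telescoping data from `(g, a)`. -/
def D (g : G) (a : Fin k → G) : ℕ → G :=
  fun m => if m = 0 then g else if h : m - 1 < k then (a ⟨m - 1, h⟩)⁻¹ else 1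

/-- The inverse change of variables. -/
def inv (g : G) (a : Fin k → G) : Fin (k + 1) → G :=
  fun t => D g a (t : ℕ) * (D g a ((t : ℕ) + 1))⁻¹

lemma prodIco_inv (g : G) (a : Fin k → G) :
    ∀ n, n ≤ k + 1 → prodIco (inv g a) (k + 1 - n) = D g a (k + 1 - n) := by
  intro n
  induction n with
  | zero =>
    intro _
    simp only [Nat.sub_zero]
    rw [prodIco_eq_one _ (le_refl _), D]
    simp
  | succ n ih =>
    intro hn
    have h1 : k + 1 - (n + 1) < k + 1 := by omega
    have h2 : k + 1 - (n + 1) + 1 = k + 1 - n := by omega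
    rw [prodIco_succ _ h1, h2, ih (by omega), inv]
    simp only [h2]
    group

lemma prodIco_inv' (g : G) (a : Fin k → G) {m : ℕ} (h : m ≤ k + 1) :
    prodIco (inv g a) m = D g a m := by
  have := prodIco_inv g a (k + 1 - m) (by omega)
  rwa [Nat.sub_sub_self h] at this

/-- The base equivalence realizing the change of variables. -/
def baseEquiv : (Fin (k + 1) → G) ≃ G × (Fin k → G) where
  toFun x := (prodRange x (k + 1), fun j => (prodIco x ((j : ℕ) + 1))⁻¹)
  invFun p := inv p.1 p.2
  left_inv x := by
    funext t
    have hD : ∀ m : ℕ, D (k := k) (prodRange x (k + 1))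
        (fun j => (prodIco x ((j : ℕ) + 1))⁻¹) m = prodIco x m := by
      intro m
      unfold D
      rcases Nat.eq_zero_or_pos m with rfl | hm
      · rw [if_pos rfl, prodRange_eq_Ico, prodIco]
      · rw [if_neg (by omega)]
        by_cases h : m - 1 < k
        · rw [dif_pos h]
          simp only [inv_inv]
          congr 1
          omega
        · rw [dif_neg h, prodIco_eq_one _ (by omega)]
    show inv _ _ t = x t
    unfold inv
    rw [hD, hD, prodIco_succ x t.isLt]
    have : (⟨(t : ℕ), t.isLt⟩ : Fin (k + 1)) = t := rfl
    rw [this]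
    group
  right_inv p := by
    ext
    · show prodRange (inv p.1 p.2) (k + 1) = p.1
      rw [prodRange_eq_Ico, ← prodIco, prodIco_inv' _ _ (Nat.zero_le _ |>.trans (le_refl 0) |> fun _ => Nat.zero_le (k+1))]
      rfl
    · show (fun j : Fin k => (prodIco (inv p.1 p.2) ((j : ℕ) + 1))⁻¹) _ = _
      next j =>
      simp only
      rw [prodIco_inv' _ _ (by omega), D, if_neg (by omega), dif_pos (by omega : (j:ℕ) + 1 - 1 < k)]
      simp

end CornerAux

/-- The simplices `(x₀,…,x_k)` of the hypergraph with edge sets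
`F_i = {x_(i) : cornerPoint i x ∈ A}` are in one-to-one correspondence with the
pairs `(g, a⃗)` such that the corner `C(g, a⃗)` is contained in `A`. -/
theorem simplices_correspond_to_corners (G : Type) [Group G] [Fintype G]
    (k : ℕ) (hk : 1 ≤ k) (A : Set (Fin k → G)) :
    Nonempty
      ({x : Fin (k + 1) → G // ∀ i : Fin (k + 1), cornerPoint i x ∈ A} ≃
        {p : G × (Fin k → G) // ∀ i : Fin (k + 1),
          (fun j : Fin k => if (j : ℕ) < (i : ℕ) then p.1 * p.2 j else p.2 j) ∈ A}) := by
  refine ⟨CornerAux.baseEquiv.subtypeEquiv fun x => ?_⟩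
  have key : ∀ i : Fin (k + 1), cornerPoint i x =
      fun j : Fin k => if (j : ℕ) < (i : ℕ)
        then (CornerAux.baseEquiv x).1 * (CornerAux.baseEquiv x).2 j
        else (CornerAux.baseEquiv x).2 j := by
    intro i
    funext j
    show (if (j : ℕ) < (i : ℕ) then prodRange x ((j : ℕ) + 1)
        else (prodIco x ((j : ℕ) + 1))⁻¹) = _
    show _ = if (j : ℕ) < (i : ℕ)
        then prodRange x (k + 1) * (prodIco x ((j : ℕ) + 1))⁻¹
        else (prodIco x ((j : ℕ) + 1))⁻¹
    by_cases h : (j : ℕ) < (i : ℕ)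
    · rw [if_pos h, if_pos h, ← CornerAux.prodRange_mul_prodIco x (m := (j : ℕ) + 1) (by omega)]
      group
    · rw [if_neg h, if_neg h]
  constructor
  · intro hx i
    rw [← key i]; exact hx i
  · intro hx i
    rw [key i]; exact hx i
end
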